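/- Let F = ℚ(√5) with ring of integers ℤ_F, and let F_2, F_6, F_{10} be the Gundlach generators of the graded ℚ-algebra of symmetric Hilbert modular forms for SL(ℤ_F ⊕ ℤ_F^∨), of weights 2, 6, 10. Define Gundlach invariants g_1 = F_2⁵/F_{10} and g_2 = F_2²F_6/F_{10}. If f/g is any quotient of two symmetric Hilbert modular forms of equal weight w with g nonzero, then f/g can be expressed as a rational fraction in g_1 and g_2 of total degree at most w/6. -/

import Mathlib

/-!
Write `N = ⌊w/6⌋`. A monomial `F₂^a F₆^b F₁₀^c` of weight `2a + 6b + 10c = w` has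
`b + c ≤ N`, and with `k = N - b - c` one checks
`F₂^a F₆^b F₁₀^c = u_w · g₁^k g₂^b`, where `u_w = F₂^(w/2 - 5N) F₁₀^N` is a unit of the
fraction field depending only on `w`. Hence every form of weight `w` is `u_w` times a
polynomial of degree `≤ N` in `g₁, g₂`, and the factor `u_w` cancels in a quotient.
-/

noncomputable section

open MvPolynomial

/- By Gundlach's theorem, the graded `ℚ`-algebra of symmetric Hilbert modular
forms for `F = ℚ(√5)` and level `SL(ℤ_F ⊕ ℤ_F^∨)` is the free polynomial
algebra `ℚ[F₂, F₆, F₁₀]` on generators of weights `2, 6, 10`. We realize it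
as `MvPolynomial (Fin 3) ℚ` with `X 0 = F₂`, `X 1 = F₆`, `X 2 = F₁₀`, graded
by the weight function `![2, 6, 10]`, and work in its fraction field. -/

/-- The field of fractions of the ring of symmetric Hilbert modular forms
for `ℚ(√5)`. -/
abbrev HilbertFF : Type := FractionRing (MvPolynomial (Fin 3) ℚ)

/-- The canonical map from modular forms to the fraction field. -/
def toFF : MvPolynomial (Fin 3) ℚ →+* HilbertFF :=
  algebraMap (MvPolynomial (Fin 3) ℚ) HilbertFF

/-- The first Gundlach invariant `g₁ = F₂⁵/F₁₀`. -/
def gundlach1 : HilbertFF := toFF (X 0 ^ 5) / toFF (X 2)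

/-- The second Gundlach invariant `g₂ = F₂²·F₆/F₁₀`. -/
def gundlach2 : HilbertFF := toFF (X 0 ^ 2 * X 1) / toFF (X 2)

/-- Evaluation of a rational expression `P ∈ ℚ[Y₁, Y₂]` at the Gundlach
invariants `(g₁, g₂)`. -/
def evalGundlach (P : MvPolynomial (Fin 2) ℚ) : HilbertFF :=
  eval₂ (toFF.comp (C : ℚ →+* MvPolynomial (Fin 3) ℚ))
    ![gundlach1, gundlach2] P

lemma toFF_injective : Function.Injective toFF :=
  IsFractionRing.injective (MvPolynomial (Fin 3) ℚ) HilbertFF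

lemma toFF_ne_zero {f : MvPolynomial (Fin 3) ℚ} (hf : f ≠ 0) : toFF f ≠ 0 :=
  (map_ne_zero_iff toFF toFF_injective).mpr hf

lemma weight_eq_of_mem_support {w : ℕ} {f : MvPolynomial (Fin 3) ℚ}
    (hf : IsWeightedHomogeneous ![2, 6, 10] f w) {d : Fin 3 →₀ ℕ} (hd : d ∈ f.support) :
    2 * d 0 + 6 * d 1 + 10 * d 2 = w := by
  rw [← hf (mem_support_iff.mp hd), Finsupp.weight_apply, Finsupp.sum_fintype _ _ (by simp),
    Fin.sum_univ_three]
  simp [mul_comm]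

def gundlachScale (w : ℕ) : HilbertFF :=
  toFF (X 0) ^ (w / 2) * toFF (X 2) ^ (w / 6) / toFF (X 0) ^ (5 * (w / 6))

def gundlachMonomial (w : ℕ) (d : Fin 3 →₀ ℕ) : MvPolynomial (Fin 2) ℚ :=
  X 0 ^ (w / 6 - (d 1 + d 2)) * X 1 ^ d 1

def gundlachPoly (w : ℕ) (f : MvPolynomial (Fin 3) ℚ) : MvPolynomial (Fin 2) ℚ :=
  ∑ d ∈ f.support, C (coeff d f) * gundlachMonomial w d

lemma totalDegree_gundlachMonomial {w : ℕ} {d : Fin 3 →₀ ℕ}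
    (hd : 2 * d 0 + 6 * d 1 + 10 * d 2 = w) :
    (gundlachMonomial w d).totalDegree ≤ w / 6 :=
  calc (gundlachMonomial w d).totalDegree
      ≤ (w / 6 - (d 1 + d 2)) + d 1 := by
        refine (totalDegree_mul _ _).trans ?_
        rw [totalDegree_X_pow, totalDegree_X_pow]
    _ ≤ w / 6 := by omega

lemma totalDegree_gundlachPoly {w : ℕ} {f : MvPolynomial (Fin 3) ℚ}
    (hf : IsWeightedHomogeneous ![2, 6, 10] f w) :
    (gundlachPoly w f).totalDegree ≤ w / 6 := by
  refine (totalDegree_finsetSum _ _).trans (Finset.sup_le fun d hd => ?_)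
  calc (C (coeff d f) * gundlachMonomial w d).totalDegree
      ≤ (C (coeff d f) : MvPolynomial (Fin 2) ℚ).totalDegree
          + (gundlachMonomial w d).totalDegree := totalDegree_mul _ _
    _ ≤ w / 6 := by
        rw [totalDegree_C, zero_add]
        exact totalDegree_gundlachMonomial (weight_eq_of_mem_support hf hd)

lemma toFF_monomial_one_eq_gundlachScale_mul_evalGundlach {w : ℕ} {d : Fin 3 →₀ ℕ}
    (hd : 2 * d 0 + 6 * d 1 + 10 * d 2 = w) :
    toFF (monomial d 1) = gundlachScale w * evalGundlach (gundlachMonomial w d) := by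
  obtain ⟨k, hk⟩ : ∃ k, w / 6 = d 1 + d 2 + k := ⟨w / 6 - (d 1 + d 2), by omega⟩
  have hw2 : w / 2 = d 0 + 3 * d 1 + 5 * d 2 := by omega
  have := toFF_ne_zero (X_ne_zero (R := ℚ) (0 : Fin 3))
  have := toFF_ne_zero (X_ne_zero (R := ℚ) (2 : Fin 3))
  simp only [gundlachScale, gundlachMonomial, evalGundlach, gundlach1, gundlach2, hk, hw2,
    add_tsub_cancel_left, monomial_eq, map_one, one_mul, Finsupp.prod_pow, Fin.prod_univ_three,
    eval₂_mul, eval₂_pow, eval₂_X, Matrix.cons_val_zero, Matrix.cons_val_one,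
    map_mul, map_pow, div_pow]
  field_simp
  ring

lemma toFF_eq_gundlachScale_mul_evalGundlach {w : ℕ} {f : MvPolynomial (Fin 3) ℚ}
    (hf : IsWeightedHomogeneous ![2, 6, 10] f w) :
    toFF f = gundlachScale w * evalGundlach (gundlachPoly w f) := by
  conv_lhs => rw [f.as_sum]
  simp only [gundlachPoly, evalGundlach, eval₂_sum, map_sum, Finset.mul_sum]
  refine Finset.sum_congr rfl fun d hd => ?_
  rw [show monomial d (coeff d f) = C (coeff d f) * monomial d 1 by rw [C_mul_monomial, mul_one],
    map_mul, toFF_monomial_one_eq_gundlachScale_mul_evalGundlach (weight_eq_of_mem_support hf hd),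
    eval₂_mul, eval₂_C, evalGundlach]
  simp only [RingHom.coe_comp, Function.comp_apply]
  ring

/-- Any quotient `f/g` of two symmetric Hilbert modular forms for `ℚ(√5)` of
equal weight `w` (with `g ≠ 0`) can be written as a rational fraction in the
Gundlach invariants `g₁, g₂` of total degree at most `w/6`. -/
theorem hilbert_modular_function_degree_le
    (w : ℕ) (f g : MvPolynomial (Fin 3) ℚ)
    (hf : IsWeightedHomogeneous ![2, 6, 10] f w)
    (hg : IsWeightedHomogeneous ![2, 6, 10] g w)
    (hg0 : g ≠ 0) :
    ∃ P Q : MvPolynomial (Fin 2) ℚ,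
      evalGundlach Q ≠ 0 ∧
      toFF f * evalGundlach Q = toFF g * evalGundlach P ∧
      (P.totalDegree : ℝ) ≤ (w : ℝ) / 6 ∧
      (Q.totalDegree : ℝ) ≤ (w : ℝ) / 6 := by
  have hf' := toFF_eq_gundlachScale_mul_evalGundlach hf
  have hg' := toFF_eq_gundlachScale_mul_evalGundlach hg
  have cast_le {m : ℕ} (h : m ≤ w / 6) : (m : ℝ) ≤ (w : ℝ) / 6 :=
    (Nat.cast_le.mpr h).trans (by exact_mod_cast Nat.cast_div_le)
  refine ⟨gundlachPoly w f, gundlachPoly w g, ?_, ?_,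
    cast_le (totalDegree_gundlachPoly hf), cast_le (totalDegree_gundlachPoly hg)⟩
  · exact right_ne_zero_of_mul (hg' ▸ toFF_ne_zero hg0)
  · rw [hf', hg']
    ring

end
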